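/- Theorem 2(3): In an n-player mining game (m₁,…,mₙ) with m₁ ≥ m₂ ≥ ⋯ ≥ mₙ, the strategy profile in which exactly pools 1 and 2 play Insightful and all other pools play RHonest (i.e., Q = {1,2}) is a pure Nash equilibrium if and only if m₁ ≥ 1/3 and m₂ ≥ g(m₁), where g(y) := (−y³ + 2y² + y − 1)/(2y² + 4y − 3). -/

import Mathlib

/-- `f(y) := y²·(2−3y)/(1−2y)`. -/
noncomputable def f (y : ℝ) : ℝ := y^2 * (2 - 3*y) / (1 - 2*y)

/-- `g(y) := (−y³ + 2y² + y − 1)/(2y² + 4y − 3)`. -/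
noncomputable def g (y : ℝ) : ℝ := (-y^3 + 2*y^2 + y - 1) / (2*y^2 + 4*y - 3)

/-- `S(Q) := ∑_{j∈Q} m_j(1−m_j)`. -/
noncomputable def S {n : ℕ} (m : Fin n → ℝ) (Q : Finset (Fin n)) : ℝ :=
  ∑ j ∈ Q, m j * (1 - m j)

/-- Expected reward of pool `i` when the set of insightful pools is `Q`. -/
noncomputable def ER {n : ℕ} (m : Fin n → ℝ) (Q : Finset (Fin n)) (i : Fin n) : ℝ :=
  if i ∈ Q then f (m i) + 2 * m i * S m Q else m i + 2 * m i * S m Q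

/-- Relative revenue (utility) of pool `i`. -/
noncomputable def RREV {n : ℕ} (m : Fin n → ℝ) (Q : Finset (Fin n)) (i : Fin n) : ℝ :=
  ER m Q i / ∑ j, ER m Q j

/-- The profile obtained from `Q` when pool `i` unilaterally switches its strategy. -/
def switch {n : ℕ} (i : Fin n) (Q : Finset (Fin n)) : Finset (Fin n) :=
  if i ∈ Q then Q.erase i else insert i Q

/-- `Q` is a pure Nash equilibrium: no pool can strictly increase its relative
revenue by unilaterally switching its own strategy. -/
def IsNash {n : ℕ} (m : Fin n → ℝ) (Q : Finset (Fin n)) : Prop :=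
  ∀ i : Fin n, RREV m (switch i Q) i ≤ RREV m Q i

namespace NashAux

lemma g_eq (y : ℝ) : g y = (-y^3 + 2*y^2 + y - 1) / (2*y^2 + 4*y - 3) := rfl
lemma S_eq {n : ℕ} (m : Fin n → ℝ) (Q : Finset (Fin n)) :
    S m Q = ∑ j ∈ Q, m j * (1 - m j) := rfl
lemma ER_eq {n : ℕ} (m : Fin n → ℝ) (Q : Finset (Fin n)) (i : Fin n) :
    ER m Q i = if i ∈ Q then f (m i) + 2 * m i * S m Q else m i + 2 * m i * S m Q := rfl
lemma RREV_eq {n : ℕ} (m : Fin n → ℝ) (Q : Finset (Fin n)) (i : Fin n) :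
    RREV m Q i = ER m Q i / ∑ j, ER m Q j := rfl
lemma switch_eq {n : ℕ} (i : Fin n) (Q : Finset (Fin n)) :
    switch i Q = if i ∈ Q then Q.erase i else insert i Q := rfl

lemma f_pos {y : ℝ} (h0 : 0 < y) (h2 : y < 1/2) : 0 < f y := by
  apply div_pos <;> nlinarith

lemma S_nonneg {n : ℕ} (m : Fin n → ℝ) (hpos : ∀ i, 0 < m i)
    (hhalf : ∀ i, m i < 1/2) (Q : Finset (Fin n)) : 0 ≤ S m Q :=
  Finset.sum_nonneg fun j _ => mul_nonneg (hpos j).le (by linarith [hhalf j])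

lemma ER_pos {n : ℕ} (m : Fin n → ℝ) (hpos : ∀ i, 0 < m i)
    (hhalf : ∀ i, m i < 1/2) (Q : Finset (Fin n)) (j : Fin n) : 0 < ER m Q j := by
  have hS := S_nonneg m hpos hhalf Q
  have h2 : 0 ≤ 2 * m j * S m Q :=
    mul_nonneg (by linarith [hpos j]) hS
  simp only [ER]
  split_ifs
  · exact add_pos_of_pos_of_nonneg (f_pos (hpos j) (hhalf j)) h2
  · exact add_pos_of_pos_of_nonneg (hpos j) h2

lemma T_pos {n : ℕ} (m : Fin n → ℝ) (hpos : ∀ i, 0 < m i)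
    (hhalf : ∀ i, m i < 1/2) (Q : Finset (Fin n)) (j0 : Fin n) :
    0 < ∑ j, ER m Q j :=
  Finset.sum_pos (fun j _ => ER_pos m hpos hhalf Q j) ⟨j0, Finset.mem_univ j0⟩

lemma total {n : ℕ} (m : Fin n → ℝ) (Q : Finset (Fin n)) (hsum : ∑ i, m i = 1) :
    ∑ j, ER m Q j = 1 + 2 * S m Q + ∑ j ∈ Q, (f (m j) - m j) := by
  have h : ∀ j ∈ Finset.univ, ER m Q j
      = (m j) * (1 + 2 * S m Q) + (if j ∈ Q then f (m j) - m j else 0) := by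
    intro j _
    simp only [ER]
    split_ifs <;> ring
  rw [Finset.sum_congr rfl h, Finset.sum_add_distrib, ← Finset.sum_mul, hsum,
    Finset.sum_ite_mem, Finset.univ_inter]
  ring

lemma fact3 {a b : ℝ} (hb : 0 < b) (hba : b ≤ a) (ha : a < 1/2)
    (hK : a^3 - 2*a^2 - a + 1 + b*(2*a^2 + 4*a - 3) ≤ 0) : 1/3 ≤ a := by
  by_contra h
  push_neg at h
  nlinarith [mul_nonneg (sub_nonneg.2 hba) (by nlinarith : (0:ℝ) ≤ 3 - 4*a - 2*a^2),
    mul_pos (by linarith : (0:ℝ) < 1 - 3*a) (by nlinarith : (0:ℝ) < 1 - a - a^2)]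

lemma fact4 {a b : ℝ} (hb : 0 < b) (hba : b ≤ a)
    (hK : a^3 - 2*a^2 - a + 1 + b*(2*a^2 + 4*a - 3) ≤ 0) :
    b^3 - 2*b^2 - b + 1 + a*(2*b^2 + 4*b - 3) ≤ 0 := by
  have hH : 0 ≤ a^2 + 3*a*b + b^2 - 2*a - 2*b + 2 := by
    nlinarith [sq_nonneg (a+b-1), mul_pos hb (lt_of_lt_of_le hb hba)]
  nlinarith [mul_nonneg (sub_nonneg.2 hba) hH]

lemma fact5 {a b x : ℝ} (ha : 1/3 ≤ a) (ha2 : a < 1/2) (hx : 0 < x) (hxb : x ≤ b)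
    (hba : b ≤ a) (hs : a + b + x ≤ 1) :
    0 ≤ -2*a^3*b + a^3 - 4*a^2*b*x + 4*a^2*b + 2*a^2*x - 2*a^2 - 2*a*b^3 - 4*a*b^2*x
      + 4*a*b^2 - 4*a*b*x + 4*a*x - a + b^3 + 2*b^2*x - 2*b^2 + 4*b*x - 3*x + 1 - b := by
  obtain ⟨SS, hSS⟩ : ∃ s : ℝ, s = a*(1-a) + b*(1-b) := ⟨_, rfl⟩
  have hb0 : 0 < b := lt_of_lt_of_le hx hxb
  have hDa : (0:ℝ) ≤ 1 - 2*a := by linarith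
  have hDb : (0:ℝ) ≤ 1 - 2*b := by linarith
  have h3x : (0:ℝ) ≤ 1 - 3*x := by linarith
  have hq : (0:ℝ) ≤ 3*a - 1 := by linarith
  have hA1 : (0:ℝ) ≤ a*(1-a) := mul_nonneg (by linarith) (by linarith)
  have hB1 : (0:ℝ) ≤ b*(1-b) := mul_nonneg hb0.le (by linarith)
  have hSpos : (0:ℝ) ≤ 1 + 2*SS := by rw [hSS]; linarith
  have hDa' : (0:ℝ) ≤ a*(1-a)*(3*a-1) := mul_nonneg hA1 hq
  have hid : -2*a^3*b + a^3 - 4*a^2*b*x + 4*a^2*b + 2*a^2*x - 2*a^2 - 2*a*b^3 - 4*a*b^2*x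
      + 4*a*b^2 - 4*a*b*x + 4*a*x - a + b^3 + 2*b^2*x - 2*b^2 + 4*b*x - 3*x + 1 - b
      = (1-3*x)*(1+2*SS)*(1-2*a)*(1-2*b) + (1-4*x)*(1-2*b)*(a*(1-a)*(3*a-1))
        + (1-4*x)*(1-2*a)*(b*(1-b)*(3*b-1)) := by rw [hSS]; ring
  rw [hid]
  rcases le_or_gt x (1/4) with hx4 | hx4
  · rcases le_or_gt (1/3) b with hb3 | hb3
    · have t1 : (0:ℝ) ≤ (1-3*x)*(1+2*SS)*(1-2*a)*(1-2*b) :=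
        mul_nonneg (mul_nonneg (mul_nonneg h3x hSpos) hDa) hDb
      have t2 : (0:ℝ) ≤ (1-4*x)*(1-2*b)*(a*(1-a)*(3*a-1)) :=
        mul_nonneg (mul_nonneg (by linarith) hDb) hDa'
      have t3 : (0:ℝ) ≤ (1-4*x)*(1-2*a)*(b*(1-b)*(3*b-1)) :=
        mul_nonneg (mul_nonneg (by linarith) hDa) (mul_nonneg hB1 (by linarith))
      linarith
    · have t2 : (0:ℝ) ≤ (1-4*x)*(1-2*b)*(a*(1-a)*(3*a-1)) :=
        mul_nonneg (mul_nonneg (by linarith) hDb) hDa'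
      have v1 : (0:ℝ) ≤ 1-3*b := by linarith
      have hW : (0:ℝ) ≤ b*(1-b)*(1-3*b) := mul_nonneg hB1 v1
      have u1 : b*(1-b) ≤ 1/4 := by nlinarith [sq_nonneg (1-2*b)]
      have c1 : (1-4*x)*(b*(1-b)*(1-3*b)) ≤ b*(1-b)*(1-3*b) :=
        mul_le_of_le_one_left hW (by linarith)
      have c2 : b*(1-b)*(1-3*b) ≤ (1/4)*(1-3*x) :=
        mul_le_mul u1 (by linarith) v1 (by norm_num)
      have c3 : (1/3)*1 ≤ (1-2*b)*(1+2*SS) :=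
        mul_le_mul (by linarith) (by linarith) zero_le_one hDb
      have c4 : (1-3*x)*((1/3)*1) ≤ (1-3*x)*((1-2*b)*(1+2*SS)) :=
        mul_le_mul_of_nonneg_left c3 h3x
      have t13 : (0:ℝ) ≤ (1-2*a) * ((1-3*x)*((1-2*b)*(1+2*SS)) - (1-4*x)*(b*(1-b)*(1-3*b))) :=
        mul_nonneg hDa (by linarith)
      linarith
  · have E1 : (0:ℝ) ≤ (1-2*a) - (4*x-1) := by linarith
    have E2 : (0:ℝ) ≤ (1-2*b) - (4*x-1) := by linarith
    rcases le_or_gt (1/3) b with hb3 | hb3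
    · have hDb' : (0:ℝ) ≤ b*(1-b)*(3*b-1) := mul_nonneg hB1 (by linarith)
      have g2 : (0:ℝ) ≤ (1-2*b)*(a*(1-a)*(3*a-1))*((1-2*a)-(4*x-1)) :=
        mul_nonneg (mul_nonneg hDb hDa') E1
      have g3 : (0:ℝ) ≤ (1-2*a)*(b*(1-b)*(3*b-1))*((1-2*b)-(4*x-1)) :=
        mul_nonneg (mul_nonneg hDa hDb') E2
      have bracket : (0:ℝ) ≤ (1-3*x)*(1+2*SS) - a*(1-a)*(3*a-1) - b*(1-b)*(3*b-1) := by
        have w1 : (0:ℝ) ≤ (3*a-1) * ((1+2*SS) - a*(1-a)) :=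
          mul_nonneg hq (by rw [hSS]; linarith)
        have w2 : (0:ℝ) ≤ (3*b-1) * ((1+2*SS) - b*(1-b)) :=
          mul_nonneg (by linarith) (by rw [hSS]; linarith)
        have w3 : (0:ℝ) ≤ (1-3*x - (3*a-1) - (3*b-1)) * (1+2*SS) :=
          mul_nonneg (by linarith) hSpos
        linarith
      have main : (0:ℝ) ≤ (1-2*a)*(1-2*b) *
          ((1-3*x)*(1+2*SS) - a*(1-a)*(3*a-1) - b*(1-b)*(3*b-1)) :=
        mul_nonneg (mul_nonneg hDa hDb) bracket
      linarith
    · have t3 : (0:ℝ) ≤ (4*x-1)*(1-2*a)*(b*(1-b)*(1-3*b)) :=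
        mul_nonneg (mul_nonneg (by linarith) hDa) (mul_nonneg hB1 (by linarith))
      have g2 : (0:ℝ) ≤ (1-2*b)*(a*(1-a)*(3*a-1))*((1-2*a)-(4*x-1)) :=
        mul_nonneg (mul_nonneg hDb hDa') E1
      have bracket : (0:ℝ) ≤ (1-3*x)*(1+2*SS) - a*(1-a)*(3*a-1) := by
        have w1 : (0:ℝ) ≤ (3*a-1) * ((1+2*SS)/2 - a*(1-a)) :=
          mul_nonneg hq (by rw [hSS]; linarith)
        have w3 : (0:ℝ) ≤ (1-3*x - (3*a-1)/2) * (1+2*SS) :=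
          mul_nonneg (by linarith) hSpos
        linarith
      have main : (0:ℝ) ≤ (1-2*a)*(1-2*b) * ((1-3*x)*(1+2*SS) - a*(1-a)*(3*a-1)) :=
        mul_nonneg (mul_nonneg hDa hDb) bracket
      linarith

set_option maxHeartbeats 2000000 in
theorem main_aux {n : ℕ} (m : Fin n → ℝ) (i0 i1 : Fin n) (h01 : i0 ≠ i1)
    (hba : m i1 ≤ m i0) (hout : ∀ i, i ≠ i0 → i ≠ i1 → m i ≤ m i1)
    (hpos : ∀ i, 0 < m i) (hhalf : ∀ i, m i < 1/2) (hsum : ∑ i, m i = 1) :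
    IsNash m {i0, i1} ↔ (1/3 ≤ m i0 ∧ g (m i0) ≤ m i1) := by
  have ha0 : 0 < m i0 := hpos i0
  have hb0 : 0 < m i1 := hpos i1
  have ha2 : m i0 < 1/2 := hhalf i0
  have hb2 : m i1 < 1/2 := hhalf i1
  have hDa : (0:ℝ) < 1 - 2*m i0 := by linarith
  have hDb : (0:ℝ) < 1 - 2*m i1 := by linarith
  have hDa0 : (1:ℝ) - 2*m i0 ≠ 0 := ne_of_gt hDa
  have hDb0 : (1:ℝ) - 2*m i1 ≠ 0 := ne_of_gt hDb
  have hden : 2*(m i0)^2 + 4*(m i0) - 3 < 0 := by nlinarith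
  have hgK : g (m i0) ≤ m i1 ↔
      (m i0)^3 - 2*(m i0)^2 - m i0 + 1 + m i1*(2*(m i0)^2 + 4*(m i0) - 3) ≤ 0 := by
    rw [g_eq, div_le_iff_of_neg hden]
    constructor <;> intro h <;> nlinarith
  -- memberships and set computations
  have hm1 : i1 ∈ ({i0, i1} : Finset (Fin n)) := by simp
  have hm0 : i0 ∈ ({i0, i1} : Finset (Fin n)) := by simp
  have h10 : i1 ≠ i0 := h01.symm
  have her1 : ({i0, i1} : Finset (Fin n)).erase i1 = {i0} := by
    rw [Finset.pair_comm, Finset.erase_insert (by simp [h10])]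
  have her0 : ({i0, i1} : Finset (Fin n)).erase i0 = {i1} := by
    rw [Finset.erase_insert (by simp [h01])]
  have hsw1 : switch i1 ({i0, i1} : Finset (Fin n)) = {i0} := by
    rw [switch_eq, if_pos hm1, her1]
  have hsw0 : switch i0 ({i0, i1} : Finset (Fin n)) = {i1} := by
    rw [switch_eq, if_pos hm0, her0]
  -- S values
  have hSQ : S m {i0, i1} = m i0*(1 - m i0) + m i1*(1 - m i1) := by
    rw [S_eq, Finset.sum_pair h01]
  have hS0 : S m {i0} = m i0*(1 - m i0) := by rw [S_eq, Finset.sum_singleton]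
  have hS1 : S m {i1} = m i1*(1 - m i1) := by rw [S_eq, Finset.sum_singleton]
  -- totals
  have hT : ∑ j, ER m {i0, i1} j
      = 1 + 2*(m i0*(1 - m i0) + m i1*(1 - m i1)) + ((f (m i0) - m i0) + (f (m i1) - m i1)) := by
    rw [total m _ hsum, hSQ, Finset.sum_pair h01]
  have hT1 : ∑ j, ER m {i0} j = 1 + 2*(m i0*(1 - m i0)) + (f (m i0) - m i0) := by
    rw [total m _ hsum, hS0, Finset.sum_singleton]
  have hT0 : ∑ j, ER m {i1} j = 1 + 2*(m i1*(1 - m i1)) + (f (m i1) - m i1) := by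
    rw [total m _ hsum, hS1, Finset.sum_singleton]
  -- ER values
  have he1 : ER m {i0, i1} i1 = f (m i1) + 2*m i1*(m i0*(1 - m i0) + m i1*(1 - m i1)) := by
    rw [ER_eq, if_pos hm1, hSQ]
  have he1' : ER m {i0} i1 = m i1 + 2*m i1*(m i0*(1 - m i0)) := by
    rw [ER_eq, if_neg (by simp [h10]), hS0]
  have he0 : ER m {i0, i1} i0 = f (m i0) + 2*m i0*(m i0*(1 - m i0) + m i1*(1 - m i1)) := by
    rw [ER_eq, if_pos hm0, hSQ]
  have he0' : ER m {i1} i0 = m i0 + 2*m i0*(m i1*(1 - m i1)) := by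
    rw [ER_eq, if_neg (by simp [h01]), hS1]
  have hTpos : 0 < ∑ j, ER m {i0, i1} j := T_pos m hpos hhalf _ i0
  have hT1pos : 0 < ∑ j, ER m {i0} j := T_pos m hpos hhalf _ i0
  have hT0pos : 0 < ∑ j, ER m {i1} j := T_pos m hpos hhalf _ i0
  have hPb : (0:ℝ) < m i1 * (1 - m i1)^2 :=
    mul_pos hb0 (pow_pos (by linarith) 2)
  have hPa : (0:ℝ) < m i0 * (1 - m i0)^2 :=
    mul_pos ha0 (pow_pos (by linarith) 2)
  -- the key identity for pool i1
  have hcalc1 : ((f (m i1) + 2*m i1*(m i0*(1 - m i0) + m i1*(1 - m i1)))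
        * (1 + 2*(m i0*(1 - m i0)) + (f (m i0) - m i0))
      - (m i1 + 2*m i1*(m i0*(1 - m i0)))
        * (1 + 2*(m i0*(1 - m i0) + m i1*(1 - m i1)) + ((f (m i0) - m i0) + (f (m i1) - m i1))))
        * ((1 - 2*m i0)*(1 - 2*m i1))
      = m i1*(1 - m i1)^2 *
        (-((m i0)^3 - 2*(m i0)^2 - m i0 + 1 + m i1*(2*(m i0)^2 + 4*(m i0) - 3))) := by
    simp only [f]
    have hC0 : (1:ℝ) - m i0*2 ≠ 0 := by contrapose! hDa0; linarith
    have hC1 : (1:ℝ) - m i1*2 ≠ 0 := by contrapose! hDb0; linarith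
    field_simp
    ring
  have key1 : (RREV m {i0} i1 ≤ RREV m {i0, i1} i1) ↔
      ((m i0)^3 - 2*(m i0)^2 - m i0 + 1 + m i1*(2*(m i0)^2 + 4*(m i0) - 3) ≤ 0) := by
    rw [RREV_eq, RREV_eq, div_le_div_iff₀ hT1pos hTpos, he1, he1', hT, hT1,
      ← sub_nonneg, ← mul_nonneg_iff_of_pos_right (mul_pos hDa hDb), hcalc1,
      mul_nonneg_iff_of_pos_left hPb, neg_nonneg]
  constructor
  · intro hN
    have h1 := hN i1
    rw [hsw1] at h1
    have hK := key1.1 h1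
    have ha3 : 1/3 ≤ m i0 := fact3 hb0 hba ha2 hK
    exact ⟨ha3, hgK.2 hK⟩
  · rintro ⟨ha3, hg⟩
    have hK := hgK.1 hg
    intro i
    by_cases hc0 : i = i0
    · rw [hc0]
      rw [hsw0]
      have hK2 := fact4 hb0 hba hK
      have hcalc0 : ((f (m i0) + 2*m i0*(m i0*(1 - m i0) + m i1*(1 - m i1)))
            * (1 + 2*(m i1*(1 - m i1)) + (f (m i1) - m i1))
          - (m i0 + 2*m i0*(m i1*(1 - m i1)))
            * (1 + 2*(m i0*(1 - m i0) + m i1*(1 - m i1)) + ((f (m i0) - m i0) + (f (m i1) - m i1))))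
            * ((1 - 2*m i0)*(1 - 2*m i1))
          = m i0*(1 - m i0)^2 *
            (-((m i1)^3 - 2*(m i1)^2 - m i1 + 1 + m i0*(2*(m i1)^2 + 4*(m i1) - 3))) := by
        simp only [f]
        have hC0 : (1:ℝ) - m i0*2 ≠ 0 := by contrapose! hDa0; linarith
        have hC1 : (1:ℝ) - m i1*2 ≠ 0 := by contrapose! hDb0; linarith
        field_simp
        ring
      rw [RREV_eq, RREV_eq, div_le_div_iff₀ hT0pos hTpos, he0, he0', hT, hT0,
        ← sub_nonneg, ← mul_nonneg_iff_of_pos_right (mul_pos hDa hDb), hcalc0,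
        mul_nonneg_iff_of_pos_left hPa, neg_nonneg]
      linarith
    · by_cases hc1 : i = i1
      · rw [hc1]
        rw [hsw1]
        exact key1.2 hK
      · -- outsider
        have hxb : m i ≤ m i1 := hout i hc0 hc1
        have hx0 : 0 < m i := hpos i
        have hx2 : m i < 1/2 := hhalf i
        have hDx : (0:ℝ) < 1 - 2*m i := by linarith
        have hDx0 : (1:ℝ) - 2*m i ≠ 0 := ne_of_gt hDx
        have hnm : i ∉ ({i0, i1} : Finset (Fin n)) := by simp [hc0, hc1]
        have hswx : switch i ({i0, i1} : Finset (Fin n)) = insert i {i0, i1} := by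
          rw [switch_eq, if_neg hnm]
        have hsum3 : m i0 + m i1 + m i ≤ 1 := by
          have hsub : ∑ j ∈ ({i0, i1, i} : Finset (Fin n)), m j ≤ ∑ j, m j :=
            Finset.sum_le_sum_of_subset_of_nonneg (Finset.subset_univ _)
              (fun j _ _ => (hpos j).le)
          rw [hsum, Finset.sum_insert (by simp [h01, Ne.symm hc0]),
            Finset.sum_insert (by simp [Ne.symm hc1]), Finset.sum_singleton] at hsub
          linarith
        have hSx : S m (insert i {i0, i1})
            = m i*(1 - m i) + (m i0*(1 - m i0) + m i1*(1 - m i1)) := by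
          rw [S_eq, Finset.sum_insert hnm, ← hSQ, S_eq]
        have hTx : ∑ j, ER m (insert i {i0, i1}) j
            = 1 + 2*(m i*(1 - m i) + (m i0*(1 - m i0) + m i1*(1 - m i1)))
              + ((f (m i) - m i) + ((f (m i0) - m i0) + (f (m i1) - m i1))) := by
          rw [total m _ hsum, hSx, Finset.sum_insert hnm, Finset.sum_pair h01]
        have hTxpos : 0 < ∑ j, ER m (insert i {i0, i1}) j := T_pos m hpos hhalf _ i0
        have hex : ER m {i0, i1} i = m i + 2*m i*(m i0*(1 - m i0) + m i1*(1 - m i1)) := by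
          rw [ER_eq, if_neg hnm, hSQ]
        have hex' : ER m (insert i {i0, i1}) i
            = f (m i) + 2*m i*(m i*(1 - m i) + (m i0*(1 - m i0) + m i1*(1 - m i1))) := by
          rw [ER_eq, if_pos (Finset.mem_insert_self i _), hSx]
        have hO := fact5 ha3 ha2 hx0 hxb hba hsum3
        have hcalcx : ((m i + 2*m i*(m i0*(1 - m i0) + m i1*(1 - m i1)))
              * (1 + 2*(m i*(1 - m i) + (m i0*(1 - m i0) + m i1*(1 - m i1)))
                + ((f (m i) - m i) + ((f (m i0) - m i0) + (f (m i1) - m i1))))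
            - (f (m i) + 2*m i*(m i*(1 - m i) + (m i0*(1 - m i0) + m i1*(1 - m i1))))
              * (1 + 2*(m i0*(1 - m i0) + m i1*(1 - m i1))
                + ((f (m i0) - m i0) + (f (m i1) - m i1))))
              * ((1 - 2*m i0)*((1 - 2*m i1)*(1 - 2*m i)))
            = m i*(1 - m i)^2 *
              (-2*(m i0)^3*(m i1) + (m i0)^3 - 4*(m i0)^2*(m i1)*(m i) + 4*(m i0)^2*(m i1)
               + 2*(m i0)^2*(m i) - 2*(m i0)^2 - 2*(m i0)*(m i1)^3 - 4*(m i0)*(m i1)^2*(m i)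
               + 4*(m i0)*(m i1)^2 - 4*(m i0)*(m i1)*(m i) + 4*(m i0)*(m i) - m i0 + (m i1)^3
               + 2*(m i1)^2*(m i) - 2*(m i1)^2 + 4*(m i1)*(m i) - 3*(m i) + 1 - m i1) := by
          simp only [f]
          have hC0 : (1:ℝ) - m i0*2 ≠ 0 := by contrapose! hDa0; linarith
          have hC1 : (1:ℝ) - m i1*2 ≠ 0 := by contrapose! hDb0; linarith
          have hC2 : (1:ℝ) - m i*2 ≠ 0 := by contrapose! hDx0; linarith
          field_simp
          ring
        have hPx : (0:ℝ) < m i * (1 - m i)^2 := mul_pos hx0 (pow_pos (by linarith) 2)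
        rw [hswx, RREV_eq, RREV_eq, div_le_div_iff₀ hTxpos hTpos, hex, hex', hT, hTx,
          ← sub_nonneg, ← mul_nonneg_iff_of_pos_right (mul_pos hDa (mul_pos hDb hDx)), hcalcx,
          mul_nonneg_iff_of_pos_left hPx]
        exact hO

end NashAux

/-- Theorem 2(3): `Q = {1,2}` (the two largest pools insightful) is a pure Nash
equilibrium iff `m₁ ≥ 1/3` and `m₂ ≥ g(m₁)`. -/
theorem two_insightful_nash_iff (n : ℕ) (hn : 2 ≤ n) (m : Fin n → ℝ)
    (hmono : ∀ i j : Fin n, i ≤ j → m j ≤ m i)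
    (hpos : ∀ i, 0 < m i) (hhalf : ∀ i, m i < 1/2)
    (hsum : ∑ i, m i = 1) :
    IsNash m ({⟨0, by omega⟩, ⟨1, by omega⟩} : Finset (Fin n)) ↔
      (1/3 ≤ m ⟨0, by omega⟩ ∧ g (m ⟨0, by omega⟩) ≤ m ⟨1, by omega⟩) := by
  apply NashAux.main_aux m ⟨0, by omega⟩ ⟨1, by omega⟩
  · intro h
    rw [Fin.ext_iff] at h
    simp at h
  · exact hmono _ _ (Fin.mk_le_mk.mpr (by norm_num))
  · intro i h0 h1
    refine hmono _ _ ?_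
    rw [Fin.le_def]
    have v0 : i.val ≠ 0 := fun h => h0 (Fin.ext h)
    have v1 : i.val ≠ 1 := fun h => h1 (Fin.ext h)
    simp
    omega
  · exact hpos
  · exact hhalf
  · exact hsum
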